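/- arXiv:2406.08697 — 5 statements merged into one kernel-verified Lean document; each statement's English description precedes it below -/
import Mathlib

section
/- In the single-period R-learner setup, with e an 𝔖-measurable version of E[A | 𝔖] and m an 𝔖-measurable version of E[Y | 𝔖], the residualized identification holds: E[Y − m − (A − e)·τ | 𝔄] = 0 P-almost surely. Equivalently, Y − m = (A − e)·τ + ε with E[ε | 𝔄] = 0 a.s. -/
/-!
On `𝔄`, the outcome model is linear in the action: `E[Y | 𝔄] = q0 + τ A` with `q0, τ` already
`𝔖`-measurable. Conditioning once more on `𝔖` (tower property and pull-out) gives
`E[Y | 𝔖] = q0 + τ E[A | 𝔖]`, so `m + (A - e) τ` is an `𝔄`-measurable version of `E[Y | 𝔄]`,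
and subtracting a version of `E[Y | 𝔄]` from `Y` leaves a residual with zero conditional mean.
-/

open MeasureTheory

namespace MeasureTheory

variable {Ω : Type*} {m₁ m₂ mΩ : MeasurableSpace Ω} {μ : Measure Ω} [IsFiniteMeasure μ]
  {Y A g τ h : Ω → ℝ}

theorem condExp_sub_ae_eq_zero_of_ae_eq_condExp (hm₂ : m₂ ≤ mΩ) (hYi : Integrable Y μ)
    (hh : StronglyMeasurable[m₂] h) (hhY : h =ᵐ[μ] μ[Y|m₂]) : μ[Y - h|m₂] =ᵐ[μ] 0 := by
  have hhi : Integrable h μ := integrable_condExp.congr hhY.symm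
  filter_upwards [condExp_sub hYi hhi m₂, hhY] with ω hsub hω
  rw [hsub, condExp_of_stronglyMeasurable hm₂ hh hhi, Pi.sub_apply, hω, sub_self, Pi.zero_apply]

theorem condExp_ae_eq_add_mul_condExp_of_condExp_ae_eq (hm₁₂ : m₁ ≤ m₂) (hm₂ : m₂ ≤ mΩ)
    (hg : StronglyMeasurable[m₁] g) (hτ : StronglyMeasurable[m₁] τ) (hgi : Integrable g μ)
    (hAi : Integrable A μ) (hY : μ[Y|m₂] =ᵐ[μ] g + τ * A) :
    μ[Y|m₁] =ᵐ[μ] g + τ * μ[A|m₁] := by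
  have hτA : Integrable (τ * A) μ := by
    simpa using (integrable_condExp.congr hY).sub hgi
  calc μ[Y|m₁] =ᵐ[μ] μ[μ[Y|m₂]|m₁] := (condExp_condExp_of_le hm₁₂ hm₂).symm
    _ =ᵐ[μ] μ[g + τ * A|m₁] := condExp_congr_ae hY
    _ =ᵐ[μ] μ[g|m₁] + μ[τ * A|m₁] := condExp_add hgi hτA m₁
    _ =ᵐ[μ] g + τ * μ[A|m₁] := by
      rw [condExp_of_stronglyMeasurable (hm₁₂.trans hm₂) hg hgi]
      exact Filter.EventuallyEq.rfl.add (condExp_mul_of_stronglyMeasurable_left hτ hτA hAi)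

theorem condExp_residualized_ae_eq_zero (hm₁₂ : m₁ ≤ m₂) (hm₂ : m₂ ≤ mΩ)
    (hA : StronglyMeasurable[m₂] A) (hAi : Integrable A μ) (hg : StronglyMeasurable[m₁] g)
    (hτ : StronglyMeasurable[m₁] τ) (hgi : Integrable g μ) (hYi : Integrable Y μ)
    (hY : μ[Y|m₂] =ᵐ[μ] g + τ * A) :
    μ[Y - μ[Y|m₁] - τ * (A - μ[A|m₁])|m₂] =ᵐ[μ] 0 := by
  rw [sub_sub]
  refine condExp_sub_ae_eq_zero_of_ae_eq_condExp hm₂ hYi ?_ ?_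
  · exact (stronglyMeasurable_condExp.mono hm₁₂).add
      ((hτ.mono hm₁₂).mul (hA.sub (stronglyMeasurable_condExp.mono hm₁₂)))
  · filter_upwards [condExp_ae_eq_add_mul_condExp_of_condExp_ae_eq hm₁₂ hm₂ hg hτ hgi hAi hY, hY]
      with ω h₁ h₂
    simp only [Pi.add_apply, Pi.mul_apply, Pi.sub_apply] at h₁ h₂ ⊢
    rw [h₁, h₂]
    ring

end MeasureTheory

theorem residualized_identification_general
    {Ω : Type*} [F : MeasurableSpace Ω] {P : Measure Ω} [IsProbabilityMeasure P]
    {𝔖 𝔄 : MeasurableSpace Ω} (hSA : 𝔖 ≤ 𝔄) (hAF : 𝔄 ≤ F)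
    (A Y q0 q1 e m : Ω → ℝ)
    (hA : StronglyMeasurable[𝔄] A)
    (hA01 : ∀ᵐ ω ∂P, A ω = 0 ∨ A ω = 1)
    (hY : MemLp Y 2 P)
    (hq0meas : StronglyMeasurable[𝔖] q0) (hq1meas : StronglyMeasurable[𝔖] q1)
    (hq0L2 : MemLp q0 2 P)
    (hQ : (fun ω => q0 ω * (1 - A ω) + q1 ω * A ω) =ᵐ[P] P[Y|𝔄])
    (he : e =ᵐ[P] P[A|𝔖])
    (hm : m =ᵐ[P] P[Y|𝔖]) :
    P[fun ω => Y ω - m ω - (A ω - e ω) * (q1 ω - q0 ω)|𝔄] =ᵐ[P] (0 : Ω → ℝ) := by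
  have hAi : Integrable A P := by
    refine .of_bound (hA.mono hAF).aestronglyMeasurable 1 ?_
    filter_upwards [hA01] with ω hω
    rcases hω with hω | hω <;> simp [hω]
  have hYA : P[Y|𝔄] =ᵐ[P] q0 + (q1 - q0) * A :=
    hQ.symm.trans <| .of_forall fun ω => by
      simp only [Pi.add_apply, Pi.mul_apply, Pi.sub_apply]
      ring
  calc P[fun ω => Y ω - m ω - (A ω - e ω) * (q1 ω - q0 ω)|𝔄]
      =ᵐ[P] P[Y - P[Y|𝔖] - (q1 - q0) * (A - P[A|𝔖])|𝔄] := by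
        refine condExp_congr_ae ?_
        filter_upwards [he, hm] with ω he hm
        simp only [Pi.sub_apply, Pi.mul_apply, he, hm]
        ring
    _ =ᵐ[P] 0 := condExp_residualized_ae_eq_zero hSA hAF hA hAi hq0meas (hq1meas.sub hq0meas)
        (hq0L2.integrable one_le_two) (hY.integrable one_le_two) hYA

/-- Single-period R-learner residualized identification (the paper's estimating moment):
`E[Y − m − (A − e)·τ | 𝔄] = 0` almost surely, where `τ = q1 − q0`,
`e` is a version of `E[A|𝔖]` and `m` is a version of `E[Y|𝔖]`. -/
theorem residualized_identification
    {Ω : Type*} [F : MeasurableSpace Ω] {P : Measure Ω} [IsProbabilityMeasure P]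
    {𝔖 𝔄 : MeasurableSpace Ω} (hSA : 𝔖 ≤ 𝔄) (hAF : 𝔄 ≤ F)
    (A Y q0 q1 e m : Ω → ℝ)
    (hA : StronglyMeasurable[𝔄] A)
    (hA01 : ∀ᵐ ω ∂P, A ω = 0 ∨ A ω = 1)
    (hY : MemLp Y 2 P)
    (hq0meas : StronglyMeasurable[𝔖] q0) (hq1meas : StronglyMeasurable[𝔖] q1)
    (hq0L2 : MemLp q0 2 P) (hq1L2 : MemLp q1 2 P)
    (hQ : (fun ω => q0 ω * (1 - A ω) + q1 ω * A ω) =ᵐ[P] P[Y|𝔄])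
    (hemeas : StronglyMeasurable[𝔖] e) (he : e =ᵐ[P] P[A|𝔖])
    (hmmeas : StronglyMeasurable[𝔖] m) (hm : m =ᵐ[P] P[Y|𝔖]) :
    P[fun ω => Y ω - m ω - (A ω - e ω) * (q1 ω - q0 ω)|𝔄] =ᵐ[P] (0 : Ω → ℝ) :=
  residualized_identification_general (F := F) hSA hAF A Y q0 q1 e m hA hA01 hY hq0meas hq1meas
    hq0L2 hQ he hm
end

section
/- In the single-period R-learner setup, with e an 𝔖-measurable version of E[A | 𝔖] and m an 𝔖-measurable version of E[Y | 𝔖], the loss functional is Neyman-orthogonal in the behavior-policy and outcome-mean nuisance directions: for all bounded 𝔖-measurable random variables Δe, Δm, and ν, (i) E[τ·Δe·(A − e)·ν] = 0, (ii) E[(Y − m − (A − e)·τ)·Δe·ν] = 0, and (iii) E[Δm·(A − e)·ν] = 0. Consequently the mixed Gâteaux derivatives D_{e,τ}L(τ, η°)[Δe, ν] and D_{m,τ}L(τ, η°)[Δm, ν] of the population loss L(g; e, m) = E[(Y − m − (A − e)g)²], evaluated at the true nuisances and true τ, vanish. -/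
/-!
Each identity is an instance of one fact: a residual `X - E[X | 𝔖]` is orthogonal in `L²` to
every `𝔖`-measurable square-integrable weight, because conditioning on `𝔖` pulls the weight out
and kills the residual. For (i) and (iii) the residual is `A - e` and the weights are `τ Δe ν`
and `Δm ν`; (ii) is the residual `Y - m` against `Δe ν`, minus (i).
-/

open MeasureTheory

section ResidualOrthogonality

variable {Ω : Type*} {𝔖 mΩ : MeasurableSpace Ω} {P : Measure Ω}

lemma memLp_top_of_forall_abs_le {g : Ω → ℝ} (hg : AEStronglyMeasurable g P)
    (hbdd : ∃ c, ∀ ω, |g ω| ≤ c) : MemLp g ⊤ P :=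
  let ⟨c, hc⟩ := hbdd
  memLp_top_of_bound hg c (ae_of_all _ hc)

lemma memLp_sub_of_ae_eq_condExp {p : ENNReal} (hp : 1 ≤ p) {X f : Ω → ℝ} (hX : MemLp X p P)
    (hf : f =ᵐ[P] P[X|𝔖]) : MemLp (X - f) p P :=
  hX.sub ((hX.condExp hp).ae_eq hf.symm)

variable [IsFiniteMeasure P]

lemma condExp_sub_ae_eq_zero_of_ae_eq_condExp (h𝔖 : 𝔖 ≤ mΩ) {X f : Ω → ℝ}
    (hX : Integrable X P) (hf : f =ᵐ[P] P[X|𝔖]) : P[X - f|𝔖] =ᵐ[P] 0 := by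
  filter_upwards [condExp_sub hX (integrable_condExp.congr hf.symm) 𝔖,
    condExp_congr_ae (m := 𝔖) hf, condExp_condExp_of_le (f := X) le_rfl h𝔖]
    with ω hsub hcongr hidem
  simp [hsub, hcongr, hidem]

lemma integral_mul_eq_zero_of_condExp_ae_eq_zero (h𝔖 : 𝔖 ≤ mΩ) {g X : Ω → ℝ}
    (hg : StronglyMeasurable[𝔖] g) (hgX : Integrable (g * X) P) (hX : Integrable X P)
    (hc : P[X|𝔖] =ᵐ[P] 0) : ∫ ω, g ω * X ω ∂P = 0 := by
  have hpull : P[g * X|𝔖] =ᵐ[P] 0 := by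
    filter_upwards [condExp_mul_of_stronglyMeasurable_left hg hgX hX, hc] with ω hω hcω
    simp [hω, hcω]
  calc ∫ ω, g ω * X ω ∂P = ∫ ω, P[g * X|𝔖] ω ∂P := (integral_condExp h𝔖).symm
    _ = 0 := by rw [integral_congr_ae hpull, Pi.zero_def, integral_zero]

lemma integral_mul_sub_eq_zero_of_ae_eq_condExp (h𝔖 : 𝔖 ≤ mΩ) {g X f : Ω → ℝ}
    (hg : StronglyMeasurable[𝔖] g) (hg2 : MemLp g 2 P) (hX : MemLp X 2 P)
    (hf : f =ᵐ[P] P[X|𝔖]) : ∫ ω, g ω * (X ω - f ω) ∂P = 0 := by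
  have hres := memLp_sub_of_ae_eq_condExp one_le_two hX hf
  exact integral_mul_eq_zero_of_condExp_ae_eq_zero h𝔖 hg (hg2.integrable_mul hres)
    (hres.integrable one_le_two)
    (condExp_sub_ae_eq_zero_of_ae_eq_condExp h𝔖 (hX.integrable one_le_two) hf)

end ResidualOrthogonality

theorem universal_orthogonality_general
    {Ω : Type*} [F : MeasurableSpace Ω] {P : Measure Ω} [IsProbabilityMeasure P]
    {𝔖 𝔄 : MeasurableSpace Ω} (hSA : 𝔖 ≤ 𝔄) (hAF : 𝔄 ≤ F)
    (A Y q0 q1 e m : Ω → ℝ)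
    (hA : StronglyMeasurable[𝔄] A)
    (hA01 : ∀ᵐ ω ∂P, A ω = 0 ∨ A ω = 1)
    (hY : MemLp Y 2 P)
    (hq0meas : StronglyMeasurable[𝔖] q0) (hq1meas : StronglyMeasurable[𝔖] q1)
    (hq0L2 : MemLp q0 2 P) (hq1L2 : MemLp q1 2 P)
    (τ : Ω → ℝ) (hτ : τ = fun ω => q1 ω - q0 ω)
    (he : e =ᵐ[P] P[A|𝔖])
    (hm : m =ᵐ[P] P[Y|𝔖])
    (Δe Δm ν : Ω → ℝ)
    (hΔemeas : StronglyMeasurable[𝔖] Δe) (hΔebdd : ∃ c, ∀ ω, |Δe ω| ≤ c)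
    (hΔmmeas : StronglyMeasurable[𝔖] Δm) (hΔmbdd : ∃ c, ∀ ω, |Δm ω| ≤ c)
    (hνmeas : StronglyMeasurable[𝔖] ν) (hνbdd : ∃ c, ∀ ω, |ν ω| ≤ c) :
    (∫ ω, τ ω * Δe ω * (A ω - e ω) * ν ω ∂P = 0)
    ∧ (∫ ω, (Y ω - m ω - (A ω - e ω) * τ ω) * Δe ω * ν ω ∂P = 0)
    ∧ (∫ ω, Δm ω * (A ω - e ω) * ν ω ∂P = 0) := by
  have hSF : 𝔖 ≤ F := hSA.trans hAF
  have hA2 : MemLp A 2 P := MemLp.of_bound (hA.mono hAF).aestronglyMeasurable 1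
    (hA01.mono fun ω h => by rcases h with h | h <;> simp [h])
  have hτ2 : MemLp τ 2 P := hτ ▸ hq1L2.sub hq0L2
  have hτmeas : StronglyMeasurable[𝔖] τ := hτ ▸ hq1meas.sub hq0meas
  have hΔe : MemLp Δe ⊤ P :=
    memLp_top_of_forall_abs_le (hΔemeas.mono hSF).aestronglyMeasurable hΔebdd
  have hΔm : MemLp Δm ⊤ P :=
    memLp_top_of_forall_abs_le (hΔmmeas.mono hSF).aestronglyMeasurable hΔmbdd
  have hν : MemLp ν ⊤ P :=
    memLp_top_of_forall_abs_le (hνmeas.mono hSF).aestronglyMeasurable hνbdd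
  have hΔeν : MemLp (Δe * ν) ⊤ P := hν.mul hΔe
  have hΔeν2 : MemLp (Δe * ν) 2 P := hΔeν.mono_exponent le_top
  have hΔeντ : MemLp (Δe * ν * τ) 2 P := hτ2.mul hΔeν
  have hΔmν2 : MemLp (Δm * ν) 2 P := (hν.mul hΔm).mono_exponent le_top
  have hτ_A := integral_mul_sub_eq_zero_of_ae_eq_condExp hSF ((hΔemeas.mul hνmeas).mul hτmeas)
    hΔeντ hA2 he
  have hΔe_Y := integral_mul_sub_eq_zero_of_ae_eq_condExp hSF (hΔemeas.mul hνmeas) hΔeν2 hY hm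
  have hΔm_A := integral_mul_sub_eq_zero_of_ae_eq_condExp hSF (hΔmmeas.mul hνmeas) hΔmν2 hA2 he
  have hintegrable_Y : Integrable (fun ω => (Δe * ν) ω * (Y ω - m ω)) P :=
    hΔeν2.integrable_mul (memLp_sub_of_ae_eq_condExp one_le_two hY hm)
  have hintegrable_A : Integrable (fun ω => (Δe * ν * τ) ω * (A ω - e ω)) P :=
    hΔeντ.integrable_mul (memLp_sub_of_ae_eq_condExp one_le_two hA2 he)
  refine ⟨(integral_congr_ae (ae_of_all _ fun ω => ?_)).trans hτ_A, ?_,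
    (integral_congr_ae (ae_of_all _ fun ω => ?_)).trans hΔm_A⟩
  · simp only [Pi.mul_apply]; ring
  · calc ∫ ω, (Y ω - m ω - (A ω - e ω) * τ ω) * Δe ω * ν ω ∂P
        = ∫ ω, (Δe * ν) ω * (Y ω - m ω) ∂P - ∫ ω, (Δe * ν * τ) ω * (A ω - e ω) ∂P := by
          rw [← integral_sub hintegrable_Y hintegrable_A]
          congr with ω
          simp only [Pi.mul_apply]; ring
      _ = 0 := by rw [hΔe_Y, hτ_A, sub_zero]
  · simp only [Pi.mul_apply]; ring

/-- Universal orthogonality of the R-learner loss in the behavior-policy (`e`) and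
outcome-mean (`m`) nuisance directions: for all bounded `𝔖`-measurable `Δe, Δm, ν`,
(i) `E[τ·Δe·(A − e)·ν] = 0`, (ii) `E[(Y − m − (A − e)τ)·Δe·ν] = 0`,
(iii) `E[Δm·(A − e)·ν] = 0`; consequently the mixed Gâteaux derivatives of the population
loss at the true nuisances vanish. -/
theorem universal_orthogonality
    {Ω : Type*} [F : MeasurableSpace Ω] {P : Measure Ω} [IsProbabilityMeasure P]
    {𝔖 𝔄 : MeasurableSpace Ω} (hSA : 𝔖 ≤ 𝔄) (hAF : 𝔄 ≤ F)
    (A Y q0 q1 e m : Ω → ℝ)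
    (hA : StronglyMeasurable[𝔄] A)
    (hA01 : ∀ᵐ ω ∂P, A ω = 0 ∨ A ω = 1)
    (hY : MemLp Y 2 P)
    (hq0meas : StronglyMeasurable[𝔖] q0) (hq1meas : StronglyMeasurable[𝔖] q1)
    (hq0L2 : MemLp q0 2 P) (hq1L2 : MemLp q1 2 P)
    (hQ : (fun ω => q0 ω * (1 - A ω) + q1 ω * A ω) =ᵐ[P] P[Y|𝔄])
    (τ : Ω → ℝ) (hτ : τ = fun ω => q1 ω - q0 ω)
    (hemeas : StronglyMeasurable[𝔖] e) (he : e =ᵐ[P] P[A|𝔖])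
    (hmmeas : StronglyMeasurable[𝔖] m) (hm : m =ᵐ[P] P[Y|𝔖])
    (Δe Δm ν : Ω → ℝ)
    (hΔemeas : StronglyMeasurable[𝔖] Δe) (hΔebdd : ∃ c, ∀ ω, |Δe ω| ≤ c)
    (hΔmmeas : StronglyMeasurable[𝔖] Δm) (hΔmbdd : ∃ c, ∀ ω, |Δm ω| ≤ c)
    (hνmeas : StronglyMeasurable[𝔖] ν) (hνbdd : ∃ c, ∀ ω, |ν ω| ≤ c) :
    (∫ ω, τ ω * Δe ω * (A ω - e ω) * ν ω ∂P = 0)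
    ∧ (∫ ω, (Y ω - m ω - (A ω - e ω) * τ ω) * Δe ω * ν ω ∂P = 0)
    ∧ (∫ ω, Δm ω * (A ω - e ω) * ν ω ∂P = 0) :=
  universal_orthogonality_general (F := F) hSA hAF A Y q0 q1 e m hA hA01 hY hq0meas hq1meas hq0L2
    hq1L2 τ hτ he hm Δe Δm ν hΔemeas hΔebdd hΔmmeas hΔmbdd hνmeas hνbdd
end

section
/- In the single-period R-learner setup, with e an 𝔖-measurable version of E[A | 𝔖] and m an 𝔖-measurable version of E[Y | 𝔖]: the true difference of Q-functions τ minimizes the population R-learner loss, i.e. for every bounded 𝔖-measurable g, E[(Y − m − (A − e)·τ)²] ≤ E[(Y − m − (A − e)·g)²], with equality if and only if E[(A − e)²(g − τ)²] = 0. In particular, if E[(A − e)² | 𝔖] ≥ λ/2 P-a.s. for some λ > 0 and τ is bounded, then any bounded 𝔖-measurable minimizer g equals τ P-almost surely. -/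
/-!
Write `τ = q1 - q0` and `R = Y - m - (A - e) τ`. Since `E[Y | 𝔄] = q0 + A τ`, the conditional
mean `E[R | 𝔄] = q0 + e τ - m` is `𝔖`-measurable, while `A - e` has conditional mean zero given
`𝔖`; by the tower property `R` is orthogonal in `L²` to `(A - e) h` for every `𝔖`-measurable `h`.
The residual at `g` is `R - (A - e) (g - τ)`, so Pythagoras gives
`rLoss g = rLoss τ + E[(A - e)² (g - τ)²]`. For a minimizer `g` the excess vanishes, so
`(g - τ)² (A - e)² = 0` a.s.; pulling `(g - τ)²` out of `E[· | 𝔖]` gives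
`(g - τ)² E[(A - e)² | 𝔖] = 0` a.s., and the lower bound on `E[(A - e)² | 𝔖]` forces `g = τ`.
-/

open MeasureTheory

section ConditionalExpectation

variable {Ω : Type*} {m m₀ : MeasurableSpace Ω} {μ : Measure Ω}

theorem integral_mul_condExp_of_stronglyMeasurable [IsFiniteMeasure μ] (hm : m ≤ m₀)
    {φ f : Ω → ℝ} (hφ : StronglyMeasurable[m] φ) (hφf : Integrable (φ * f) μ)
    (hf : Integrable f μ) :
    ∫ ω, (φ * μ[f|m]) ω ∂μ = ∫ ω, (φ * f) ω ∂μ := by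
  rw [← integral_condExp hm (f := φ * f)]
  exact integral_congr_ae (condExp_mul_of_stronglyMeasurable_left hφ hφf hf).symm

theorem integral_mul_eq_zero_of_condExp_eq_zero [IsFiniteMeasure μ] (hm : m ≤ m₀)
    {φ f : Ω → ℝ} (hφ : StronglyMeasurable[m] φ) (hφf : Integrable (φ * f) μ)
    (hf : Integrable f μ) (hf₀ : μ[f|m] =ᵐ[μ] 0) :
    ∫ ω, (φ * f) ω ∂μ = 0 := by
  rw [← integral_mul_condExp_of_stronglyMeasurable hm hφ hφf hf]
  exact integral_eq_zero_of_ae (hf₀.mono fun ω h => by simp [h])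

theorem ae_eq_zero_of_mul_ae_eq_zero_of_condExp_pos {u w : Ω → ℝ}
    (hu : StronglyMeasurable[m] u) (huw : Integrable (u * w) μ) (hw : Integrable w μ)
    (huw₀ : u * w =ᵐ[μ] 0) (hpos : ∀ᵐ ω ∂μ, 0 < μ[w|m] ω) : u =ᵐ[μ] 0 := by
  have h : u * μ[w|m] =ᵐ[μ] 0 := by
    refine (condExp_mul_of_stronglyMeasurable_left hu huw hw).symm.trans ?_
    simpa only [condExp_zero] using condExp_congr_ae (m := m) huw₀
  filter_upwards [h, hpos] with ω hω hposω
  exact (mul_eq_zero.mp hω).resolve_right hposω.ne'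

theorem ae_eq_zero_of_integral_sq_mul_sq_eq_zero [IsFiniteMeasure μ] {D u : Ω → ℝ}
    (hD : MemLp D ⊤ μ) (hum : StronglyMeasurable[m] u) (hu : MemLp u 2 μ)
    (hpos : ∀ᵐ ω ∂μ, 0 < μ[fun ω => D ω ^ 2|m] ω) (h₀ : ∫ ω, D ω ^ 2 * u ω ^ 2 ∂μ = 0) :
    u =ᵐ[μ] 0 := by
  have hint : Integrable (fun ω => u ω ^ 2 * D ω ^ 2) μ := by
    simpa only [Pi.mul_apply, mul_pow, mul_comm] using (hu.mul hD).integrable_sq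
  have hzero : (fun ω => u ω ^ 2 * D ω ^ 2) =ᵐ[μ] 0 := by
    refine (integral_eq_zero_iff_of_nonneg (fun ω => by positivity) hint).mp ?_
    simpa only [mul_comm] using h₀
  have hsq : (fun ω => u ω ^ 2) =ᵐ[μ] 0 :=
    ae_eq_zero_of_mul_ae_eq_zero_of_condExp_pos (hum.pow 2) hint
      (hD.mono_exponent le_top).integrable_sq hzero hpos
  filter_upwards [hsq] with ω hω
  exact pow_eq_zero_iff two_ne_zero |>.mp hω

theorem integral_mul_mul_eq_zero_of_condExp_eq_zero [IsFiniteMeasure μ] {m' : MeasurableSpace Ω}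
    (hmm' : m ≤ m') (hm' : m' ≤ m₀) {D R r h : Ω → ℝ} (hDm : StronglyMeasurable[m'] D)
    (hD : MemLp D ⊤ μ) (hD₀ : μ[D|m] =ᵐ[μ] 0) (hR : MemLp R 2 μ)
    (hrm : StronglyMeasurable[m] r) (hr : MemLp r 2 μ) (hRr : μ[R|m'] =ᵐ[μ] r)
    (hhm : StronglyMeasurable[m] h) (hh : MemLp h 2 μ) :
    ∫ ω, D ω * h ω * R ω ∂μ = 0 := by
  have hDh : MemLp (D * h) 2 μ := hh.mul hD
  calc ∫ ω, D ω * h ω * R ω ∂μ = ∫ ω, (D * h * μ[R|m']) ω ∂μ :=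
        (integral_mul_condExp_of_stronglyMeasurable hm' (hDm.mul (hhm.mono hmm'))
          (hDh.integrable_mul hR) (hR.integrable one_le_two)).symm
    _ = ∫ ω, (h * r * D) ω ∂μ :=
        integral_congr_ae (hRr.mono fun ω hω => by simp only [Pi.mul_apply, hω]; ring)
    _ = 0 :=
        integral_mul_eq_zero_of_condExp_eq_zero (hmm'.trans hm') (hhm.mul hrm)
          ((hh.integrable_mul hr).mul_of_top_left hD) (hD.integrable le_top) hD₀

end ConditionalExpectation

theorem integral_add_sq_of_integral_mul_eq_zero {Ω : Type*} [MeasurableSpace Ω]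
    {μ : Measure Ω} {f g : Ω → ℝ} (hf : MemLp f 2 μ) (hg : MemLp g 2 μ)
    (hfg : ∫ ω, f ω * g ω ∂μ = 0) :
    ∫ ω, (f ω + g ω) ^ 2 ∂μ = ∫ ω, f ω ^ 2 ∂μ + ∫ ω, g ω ^ 2 ∂μ := by
  have hcross : Integrable (fun ω => 2 * (f ω * g ω)) μ := (hf.integrable_mul hg).const_mul 2
  calc ∫ ω, (f ω + g ω) ^ 2 ∂μ = ∫ ω, (f ω ^ 2 + g ω ^ 2 + 2 * (f ω * g ω)) ∂μ := by
        congr with ω; ring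
    _ = ∫ ω, f ω ^ 2 ∂μ + ∫ ω, g ω ^ 2 ∂μ := by
        have hsq : Integrable (fun ω => f ω ^ 2 + g ω ^ 2) μ :=
          hf.integrable_sq.add hg.integrable_sq
        rw [integral_add hsq hcross,
          integral_add hf.integrable_sq hg.integrable_sq, integral_const_mul, hfg, mul_zero,
          add_zero]

structure RLearnerModel {Ω : Type*} {F : MeasurableSpace Ω} (P : Measure Ω)
    (𝔖 𝔄 : MeasurableSpace Ω) (A Y q0 q1 e m : Ω → ℝ) : Prop where
  state_le_stateAction : 𝔖 ≤ 𝔄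
  stateAction_le : 𝔄 ≤ F
  stronglyMeasurable_action : StronglyMeasurable[𝔄] A
  action_eq_zero_or_one : ∀ᵐ ω ∂P, A ω = 0 ∨ A ω = 1
  memLp_target : MemLp Y 2 P
  stronglyMeasurable_q0 : StronglyMeasurable[𝔖] q0
  stronglyMeasurable_q1 : StronglyMeasurable[𝔖] q1
  memLp_q0 : MemLp q0 2 P
  memLp_q1 : MemLp q1 2 P
  condExp_target : (fun ω => q0 ω * (1 - A ω) + q1 ω * A ω) =ᵐ[P] P[Y|𝔄]
  stronglyMeasurable_propensity : StronglyMeasurable[𝔖] e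
  propensity_ae_eq : e =ᵐ[P] P[A|𝔖]
  stronglyMeasurable_mean : StronglyMeasurable[𝔖] m
  mean_ae_eq : m =ᵐ[P] P[Y|𝔖]

noncomputable def rLoss {Ω : Type*} {_ : MeasurableSpace Ω} (P : Measure Ω)
    (Y m A e g : Ω → ℝ) : ℝ :=
  ∫ ω, (Y ω - m ω - (A ω - e ω) * g ω) ^ 2 ∂P

namespace RLearnerModel

-- `F` is bound after `𝔖 𝔄` so that instance synthesis picks the ambient σ-algebra.
variable {Ω : Type*} {𝔖 𝔄 : MeasurableSpace Ω} {F : MeasurableSpace Ω} {P : Measure Ω}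
  {A Y q0 q1 e m : Ω → ℝ} (M : RLearnerModel P 𝔖 𝔄 A Y q0 q1 e m)
include M

theorem state_le : 𝔖 ≤ F := M.state_le_stateAction.trans M.stateAction_le

theorem stronglyMeasurable_tau : StronglyMeasurable[𝔖] (q1 - q0) :=
  M.stronglyMeasurable_q1.sub M.stronglyMeasurable_q0

theorem memLp_tau : MemLp (q1 - q0) 2 P := M.memLp_q1.sub M.memLp_q0

theorem memLp_mean : MemLp m 2 P :=
  (M.memLp_target.condExp one_le_two).ae_eq M.mean_ae_eq.symm

theorem memLp_of_bounded [IsFiniteMeasure P] {g : Ω → ℝ} (hgm : StronglyMeasurable[𝔖] g)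
    (hgb : ∃ c, ∀ ω, |g ω| ≤ c) : MemLp g 2 P :=
  let ⟨c, hc⟩ := hgb
  .of_bound (hgm.mono M.state_le).aestronglyMeasurable c (.of_forall hc)

theorem memLp_top_action : MemLp A ⊤ P := by
  refine memLp_top_of_bound
    (M.stronglyMeasurable_action.mono M.stateAction_le).aestronglyMeasurable 1 ?_
  filter_upwards [M.action_eq_zero_or_one] with ω hω
  rcases hω with hω | hω <;> simp [hω]

theorem memLp_top_propensity [IsFiniteMeasure P] : MemLp e ⊤ P :=
  (M.memLp_top_action.condExp le_top).ae_eq M.propensity_ae_eq.symm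

theorem memLp_top_action_sub_propensity [IsFiniteMeasure P] : MemLp (A - e) ⊤ P :=
  M.memLp_top_action.sub M.memLp_top_propensity

theorem stronglyMeasurable_action_sub_propensity : StronglyMeasurable[𝔄] (A - e) :=
  M.stronglyMeasurable_action.sub (M.stronglyMeasurable_propensity.mono M.state_le_stateAction)

theorem condExp_action_sub_propensity [IsFiniteMeasure P] : P[A - e|𝔖] =ᵐ[P] 0 := by
  have he : Integrable e P := M.memLp_top_propensity.integrable le_top
  have hee : P[e|𝔖] = e :=
    condExp_of_stronglyMeasurable M.state_le M.stronglyMeasurable_propensity he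
  filter_upwards [condExp_sub (M.memLp_top_action.integrable le_top) he 𝔖, M.propensity_ae_eq]
    with ω hsub hω
  rw [hsub, Pi.sub_apply, hee, hω, sub_self, Pi.zero_apply]

theorem memLp_residual [IsFiniteMeasure P] : MemLp (Y - m - (A - e) * (q1 - q0)) 2 P :=
  (M.memLp_target.sub M.memLp_mean).sub (M.memLp_tau.mul M.memLp_top_action_sub_propensity)

theorem condExp_residual [IsFiniteMeasure P] :
    P[Y - m - (A - e) * (q1 - q0)|𝔄] =ᵐ[P] q0 + e * (q1 - q0) - m := by
  have hB : MemLp (m + (A - e) * (q1 - q0)) 2 P :=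
    M.memLp_mean.add (M.memLp_tau.mul M.memLp_top_action_sub_propensity)
  have hBm : StronglyMeasurable[𝔄] (m + (A - e) * (q1 - q0)) :=
    (M.stronglyMeasurable_mean.mono M.state_le_stateAction).add
      (M.stronglyMeasurable_action_sub_propensity.mul
        (M.stronglyMeasurable_tau.mono M.state_le_stateAction))
  calc P[Y - m - (A - e) * (q1 - q0)|𝔄] = P[Y - (m + (A - e) * (q1 - q0))|𝔄] := by
        rw [sub_sub]
    _ =ᵐ[P] P[Y|𝔄] - P[m + (A - e) * (q1 - q0)|𝔄] :=
        condExp_sub (M.memLp_target.integrable one_le_two) (hB.integrable one_le_two) 𝔄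
    _ =ᵐ[P] q0 + e * (q1 - q0) - m := by
        rw [condExp_of_stronglyMeasurable M.stateAction_le hBm (hB.integrable one_le_two)]
        filter_upwards [M.condExp_target] with ω hω
        simp only [Pi.sub_apply, Pi.add_apply, Pi.mul_apply, ← hω]
        ring

theorem integral_mul_residual_eq_zero [IsFiniteMeasure P] {h : Ω → ℝ}
    (hhm : StronglyMeasurable[𝔖] h) (hh : MemLp h 2 P) :
    ∫ ω, (A - e) ω * h ω * (Y - m - (A - e) * (q1 - q0)) ω ∂P = 0 := by
  have hrm : StronglyMeasurable[𝔖] (q0 + e * (q1 - q0) - m) :=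
    (M.stronglyMeasurable_q0.add
      (M.stronglyMeasurable_propensity.mul M.stronglyMeasurable_tau)).sub
      M.stronglyMeasurable_mean
  have hr : MemLp (q0 + e * (q1 - q0) - m) 2 P :=
    (M.memLp_q0.add (M.memLp_tau.mul M.memLp_top_propensity)).sub M.memLp_mean
  exact integral_mul_mul_eq_zero_of_condExp_eq_zero M.state_le_stateAction M.stateAction_le
    M.stronglyMeasurable_action_sub_propensity M.memLp_top_action_sub_propensity
    M.condExp_action_sub_propensity M.memLp_residual hrm hr M.condExp_residual hhm hh

theorem rLoss_eq_rLoss_tau_add [IsFiniteMeasure P] {g : Ω → ℝ} (hgm : StronglyMeasurable[𝔖] g)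
    (hg : MemLp g 2 P) :
    rLoss P Y m A e g = rLoss P Y m A e (q1 - q0)
      + ∫ ω, (A ω - e ω) ^ 2 * (g ω - (q1 - q0) ω) ^ 2 ∂P := by
  have hd : MemLp ((A - e) * (q1 - q0 - g)) 2 P :=
    (M.memLp_tau.sub hg).mul M.memLp_top_action_sub_propensity
  have horth := M.integral_mul_residual_eq_zero (M.stronglyMeasurable_tau.sub hgm)
    (M.memLp_tau.sub hg)
  have hpyth := integral_add_sq_of_integral_mul_eq_zero M.memLp_residual hd
    (by rw [← horth]; congr with ω; simp only [Pi.mul_apply]; ring)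
  -- the residual at `g` is the residual at `q1 - q0` plus `(A - e) (q1 - q0 - g)`
  unfold rLoss
  convert hpyth using 2 <;> congr with ω <;> simp only [Pi.mul_apply, Pi.sub_apply] <;> ring

theorem rLoss_tau_le [IsFiniteMeasure P] {g : Ω → ℝ} (hgm : StronglyMeasurable[𝔖] g)
    (hg : MemLp g 2 P) : rLoss P Y m A e (q1 - q0) ≤ rLoss P Y m A e g := by
  rw [M.rLoss_eq_rLoss_tau_add hgm hg]
  exact le_add_of_nonneg_right (integral_nonneg fun ω => by positivity)

theorem rLoss_tau_eq_iff [IsFiniteMeasure P] {g : Ω → ℝ} (hgm : StronglyMeasurable[𝔖] g)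
    (hg : MemLp g 2 P) :
    rLoss P Y m A e (q1 - q0) = rLoss P Y m A e g ↔
      ∫ ω, (A ω - e ω) ^ 2 * (g ω - (q1 - q0) ω) ^ 2 ∂P = 0 := by
  rw [M.rLoss_eq_rLoss_tau_add hgm hg]
  exact left_eq_add

theorem ae_eq_tau_of_rLoss_le [IsFiniteMeasure P] {g : Ω → ℝ} (hgm : StronglyMeasurable[𝔖] g)
    (hg : MemLp g 2 P) (hpos : ∀ᵐ ω ∂P, 0 < P[fun ω => (A ω - e ω) ^ 2|𝔖] ω)
    (hle : rLoss P Y m A e g ≤ rLoss P Y m A e (q1 - q0)) : g =ᵐ[P] q1 - q0 := by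
  have hgap : ∫ ω, (A ω - e ω) ^ 2 * (g ω - (q1 - q0) ω) ^ 2 ∂P = 0 :=
    (M.rLoss_tau_eq_iff hgm hg).mp (le_antisymm (M.rLoss_tau_le hgm hg) hle)
  have hdiff := ae_eq_zero_of_integral_sq_mul_sq_eq_zero M.memLp_top_action_sub_propensity
    (hgm.sub M.stronglyMeasurable_tau) (hg.sub M.memLp_tau) hpos hgap
  filter_upwards [hdiff] with ω hω
  exact sub_eq_zero.mp hω

end RLearnerModel

/-- The true difference of Q-functions `τ` minimizes the population R-learner loss
`g ↦ E[(Y − m − (A − e)g)²]` over bounded `𝔖`-measurable `g`, with equality iff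
`E[(A − e)²(g − τ)²] = 0`; and under the conditional-variance lower bound
`E[(A − e)² | 𝔖] ≥ λ/2` a.s. (with `λ > 0`) and boundedness of `τ`, any bounded
`𝔖`-measurable minimizer equals `τ` almost surely. -/
theorem tau_minimizes_population_loss
    {Ω : Type*} [F : MeasurableSpace Ω] {P : Measure Ω} [IsProbabilityMeasure P]
    {𝔖 𝔄 : MeasurableSpace Ω} (hSA : 𝔖 ≤ 𝔄) (hAF : 𝔄 ≤ F)
    (A Y q0 q1 e m : Ω → ℝ)
    (hA : StronglyMeasurable[𝔄] A)
    (hA01 : ∀ᵐ ω ∂P, A ω = 0 ∨ A ω = 1)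
    (hY : MemLp Y 2 P)
    (hq0meas : StronglyMeasurable[𝔖] q0) (hq1meas : StronglyMeasurable[𝔖] q1)
    (hq0L2 : MemLp q0 2 P) (hq1L2 : MemLp q1 2 P)
    (hQ : (fun ω => q0 ω * (1 - A ω) + q1 ω * A ω) =ᵐ[P] P[Y|𝔄])
    (τ : Ω → ℝ) (hτ : τ = fun ω => q1 ω - q0 ω)
    (hemeas : StronglyMeasurable[𝔖] e) (he : e =ᵐ[P] P[A|𝔖])
    (hmmeas : StronglyMeasurable[𝔖] m) (hm : m =ᵐ[P] P[Y|𝔖]) :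
    (∀ g : Ω → ℝ, StronglyMeasurable[𝔖] g → (∃ c, ∀ ω, |g ω| ≤ c) →
      (∫ ω, (Y ω - m ω - (A ω - e ω) * τ ω) ^ 2 ∂P)
        ≤ (∫ ω, (Y ω - m ω - (A ω - e ω) * g ω) ^ 2 ∂P)
      ∧ ((∫ ω, (Y ω - m ω - (A ω - e ω) * τ ω) ^ 2 ∂P)
            = (∫ ω, (Y ω - m ω - (A ω - e ω) * g ω) ^ 2 ∂P)
          ↔ ∫ ω, (A ω - e ω) ^ 2 * (g ω - τ ω) ^ 2 ∂P = 0))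
    ∧ (∀ lam : ℝ, 0 < lam →
        (∀ᵐ ω ∂P, lam / 2 ≤ (P[fun ω' => (A ω' - e ω') ^ 2|𝔖]) ω) →
        (∃ c, ∀ ω, |τ ω| ≤ c) →
        ∀ g : Ω → ℝ, StronglyMeasurable[𝔖] g → (∃ c, ∀ ω, |g ω| ≤ c) →
          (∀ h : Ω → ℝ, StronglyMeasurable[𝔖] h → (∃ c, ∀ ω, |h ω| ≤ c) →
            (∫ ω, (Y ω - m ω - (A ω - e ω) * g ω) ^ 2 ∂P)
              ≤ (∫ ω, (Y ω - m ω - (A ω - e ω) * h ω) ^ 2 ∂P)) →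
          g =ᵐ[P] τ) := by
  obtain rfl : τ = q1 - q0 := hτ
  have M : RLearnerModel P 𝔖 𝔄 A Y q0 q1 e m :=
    ⟨hSA, hAF, hA, hA01, hY, hq0meas, hq1meas, hq0L2, hq1L2, hQ, hemeas, he, hmmeas, hm⟩
  refine ⟨fun g hgm hgb => ?_, fun lam hlam hcond hτb g hgm hgb hmin => ?_⟩
  · have hg := M.memLp_of_bounded hgm hgb
    exact ⟨M.rLoss_tau_le hgm hg, M.rLoss_tau_eq_iff hgm hg⟩
  · exact M.ae_eq_tau_of_rLoss_le hgm (M.memLp_of_bounded hgm hgb)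
      (hcond.mono fun ω hω => (half_pos hlam).trans_le hω)
      (hmin _ M.stronglyMeasurable_tau hτb)
end

section
/- Let (S, 𝒮, μ) be a measure space and f, f̂ : S → ℝ measurable functions (the true and estimated difference of Q-functions over two actions). Define the greedy decision rules π*(s) = 1 iff f(s) > 0 and π̂(s) = 1 iff f̂(s) > 0, and the pointwise decision regret r(s) := |f(s)| if π̂(s) ≠ π*(s) and r(s) := 0 otherwise. Suppose t > 0 is such that |f̂(s) − f(s)| ≤ t for all s ∈ S, and the margin condition μ{s : 0 < |f(s)| ≤ 2t} ≤ C(2t)^α holds for constants C ≥ 0 and α ≥ 0. Then ∫_S r dμ ≤ C·(2t)^{1+α} = C·2^{1+α}·t^{1+α}. -/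
open MeasureTheory

/-! A wrong decision at `s` requires `f̂ s` and `f s` to lie on opposite sides of `0`, which forces
`|f s| ≤ |f̂ s - f s| ≤ t`. So the regret is at most `2t` times the indicator of the margin set
`{0 < |f| ≤ 2t}`, whose measure is at most `C (2t)^α`. -/

lemma abs_le_abs_sub_of_not_pos_iff {a b : ℝ} (h : ¬(0 < b ↔ 0 < a)) : |a| ≤ |b - a| := by
  rcases lt_or_ge 0 a with ha | ha <;> rcases lt_or_ge 0 b with hb | hb
  · exact absurd (iff_of_true hb ha) h
  · rw [abs_of_pos ha, abs_sub_comm]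
    exact le_abs.mpr (Or.inl (by linarith))
  · rw [abs_of_nonpos ha]
    exact le_abs.mpr (Or.inl (by linarith))
  · exact absurd (iff_of_false hb.not_gt ha.not_gt) h

lemma integral_le_mul_measureReal_of_le_indicator {S : Type*} [MeasurableSpace S]
    {μ : Measure S} {g : S → ℝ} {A : Set S} {c : ℝ} (hc : 0 ≤ c) (hA : μ A ≠ ⊤)
    (hg₀ : 0 ≤ᵐ[μ] g) (hg : g ≤ᵐ[μ] A.indicator fun _ ↦ c) :
    ∫ s, g s ∂μ ≤ c * μ.real A := by
  -- `A` need not be measurable: pass to its measurable hull, which has the same measure.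
  have hg_hull : g ≤ᵐ[μ] (toMeasurable μ A).indicator fun _ ↦ c :=
    hg.mono fun s hs ↦
      hs.trans (Set.indicator_le_indicator_of_subset (subset_toMeasurable μ A) (fun _ ↦ hc) s)
  have h_hull_integrable : Integrable ((toMeasurable μ A).indicator fun _ ↦ c) μ :=
    (integrable_indicator_iff (measurableSet_toMeasurable μ A)).mpr
      (integrableOn_const (by rwa [measure_toMeasurable]))
  calc ∫ s, g s ∂μ ≤ ∫ s, (toMeasurable μ A).indicator (fun _ ↦ c) s ∂μ :=
        integral_mono_of_nonneg hg₀ h_hull_integrable hg_hull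
    _ = c * μ.real A := by
        rw [integral_indicator_const c (measurableSet_toMeasurable μ A), smul_eq_mul, mul_comm,
          measureReal_def, measure_toMeasurable, ← measureReal_def]

theorem margin_regret_sup_norm_general
    {S : Type*} [MeasurableSpace S] (μ : Measure S)
    (f fhat : S → ℝ)
    (r : S → ℝ)
    (hr : ∀ s, r s = if (0 < fhat s) ↔ (0 < f s) then 0 else |f s|)
    (t : ℝ) (ht : 0 < t)
    (hunif : ∀ s, |fhat s - f s| ≤ t)
    (C α : ℝ) (hC : 0 ≤ C)
    (hmargin : μ {s | 0 < |f s| ∧ |f s| ≤ 2 * t} ≤ ENNReal.ofReal (C * (2 * t) ^ α)) :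
    ∫ s, r s ∂μ ≤ C * (2 * t) ^ ((1 : ℝ) + α) := by
  set A : Set S := {s | 0 < |f s| ∧ |f s| ≤ 2 * t}
  have hr_nonneg : ∀ s, 0 ≤ r s := fun s ↦ by
    rw [hr s]; split_ifs <;> simp
  have hr_le : ∀ s, r s ≤ A.indicator (fun _ ↦ 2 * t) s := fun s ↦ by
    rw [hr s]
    split_ifs with hagree
    · exact Set.indicator_nonneg (fun _ _ ↦ by positivity) s
    · rcases (abs_nonneg (f s)).eq_or_lt with hzero | hpos
      · rw [← hzero]; exact Set.indicator_nonneg (fun _ _ ↦ by positivity) s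
      · have hwrong : |f s| ≤ 2 * t := by
          linarith [abs_le_abs_sub_of_not_pos_iff hagree, hunif s]
        rw [Set.indicator_of_mem (show s ∈ A from ⟨hpos, hwrong⟩)]
        exact hwrong
  have hμA : μ.real A ≤ C * (2 * t) ^ α :=
    ENNReal.toReal_le_of_le_ofReal (by positivity) hmargin
  calc ∫ s, r s ∂μ ≤ 2 * t * μ.real A :=
        integral_le_mul_measureReal_of_le_indicator (by positivity) (hmargin.trans_lt ENNReal.ofReal_lt_top).ne
          (.of_forall hr_nonneg) (.of_forall hr_le)
    _ ≤ 2 * t * (C * (2 * t) ^ α) := by gcongr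
    _ = C * (2 * t) ^ ((1 : ℝ) + α) := by
        rw [Real.rpow_add (by positivity), Real.rpow_one]; ring

/-- Sup-norm-rate case of the paper's Lemma 2 (margin): if the estimate `f̂` of the true
difference of Q-functions `f` is uniformly within `t` of `f`, and the margin condition
`μ{s : 0 < |f s| ≤ 2t} ≤ C(2t)^α` holds, then the integrated decision regret `r`
(where `r s = |f s|` if the greedy rules disagree at `s`, else `0`) is at most
`C·(2t)^{1+α}`. -/
theorem margin_regret_sup_norm
    {S : Type*} [MeasurableSpace S] (μ : Measure S)
    (f fhat : S → ℝ) (hf : Measurable f) (hfhat : Measurable fhat)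
    (r : S → ℝ)
    (hr : ∀ s, r s = if (0 < fhat s) ↔ (0 < f s) then 0 else |f s|)
    (t : ℝ) (ht : 0 < t)
    (hunif : ∀ s, |fhat s - f s| ≤ t)
    (C α : ℝ) (hC : 0 ≤ C) (hα : 0 ≤ α)
    (hmargin : μ {s | 0 < |f s| ∧ |f s| ≤ 2 * t} ≤ ENNReal.ofReal (C * (2 * t) ^ α)) :
    ∫ s, r s ∂μ ≤ C * (2 * t) ^ ((1 : ℝ) + α) :=
  margin_regret_sup_norm_general μ f fhat r hr t ht hunif C α hC hmargin
end

section
/- Let (S, 𝒮, μ) be a measure space and f, f̂ : S → ℝ measurable functions. Define π*(s) = 1 iff f(s) > 0, π̂(s) = 1 iff f̂(s) > 0, and the pointwise decision regret r(s) := |f(s)| if π̂(s) ≠ π*(s) and r(s) := 0 otherwise. Fix ε > 0 and suppose the margin condition μ{s : 0 < |f(s)| ≤ ε} ≤ C·ε^α holds for constants C ≥ 0, α ≥ 0, and that ∫_S (f̂ − f)² dμ < ∞. Then ∫_S r dμ ≤ C·ε^{1+α} + (4/ε)·∫_S (f̂ − f)² dμ. (Key pointwise facts: on the mistake set {π̂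 ≠ π*}, |f(s)| ≤ 2|f̂(s) − f(s)|, so where additionally |f(s)| > ε one has r(s) ≤ 4(f̂(s) − f(s))²/ε.) -/
/-!
On the mistake set the signs of `f̂ s` and `f s` disagree, so `|f s| ≤ |f̂ s - f s|`.
Where moreover `|f s| > ε`, this gives `|f s| < (f̂ s - f s)² / ε`; the remaining mistakes lie
in the margin set `{0 < |f| ≤ ε}`, where the regret is at most `ε`, and the margin condition
bounds `ε` times its measure by `C ε^{1+α}`.
-/

open MeasureTheory

def marginSet {S : Type*} (f : S → ℝ) (ε : ℝ) : Set S := {s | 0 < |f s| ∧ |f s| ≤ ε}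

theorem measurableSet_marginSet {S : Type*} [MeasurableSpace S] {f : S → ℝ} (hf : Measurable f)
    (ε : ℝ) : MeasurableSet (marginSet f ε) :=
  (measurableSet_lt measurable_const hf.abs).inter (measurableSet_le hf.abs measurable_const)

theorem abs_le_abs_sub_of_not_pos_iff_s11 {x y : ℝ} (h : ¬(0 < y ↔ 0 < x)) : |x| ≤ |y - x| := by
  rcases lt_or_ge 0 y with hy | hy <;> rcases lt_or_ge 0 x with hx | hx
  · exact absurd (iff_of_true hy hx) h
  · rw [abs_of_nonpos hx, abs_of_pos (by linarith)]; linarith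
  · rw [abs_of_pos hx, abs_of_nonpos (by linarith)]; linarith
  · exact absurd (iff_of_false hy.not_gt hx.not_gt) h

theorem abs_le_indicator_add_sq_div_of_not_pos_iff {x y ε : ℝ} (hε : 0 < ε)
    (h : ¬(0 < y ↔ 0 < x)) :
    |x| ≤ {t : ℝ | 0 < |t| ∧ |t| ≤ ε}.indicator (fun _ => ε) x + (y - x) ^ 2 / ε := by
  have hdiff := abs_le_abs_sub_of_not_pos_iff_s11 h
  have hsq : 0 ≤ (y - x) ^ 2 / ε := by positivity
  by_cases hmargin : x ∈ {t : ℝ | 0 < |t| ∧ |t| ≤ ε}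
  · rw [Set.indicator_of_mem hmargin]
    linarith [hmargin.2]
  · rw [Set.indicator_of_notMem hmargin, zero_add]
    rcases (abs_nonneg x).eq_or_lt with hzero | hpos
    · linarith
    · have hlarge : ε < |y - x| := by linarith [not_le.mp fun h => hmargin ⟨hpos, h⟩]
      rw [le_div_iff₀ hε, ← sq_abs, sq]
      exact mul_le_mul hdiff hlarge.le hε.le (abs_nonneg _)

section Regret

variable {S : Type*} {f fhat r : S → ℝ} {ε : ℝ}

theorem regret_le_indicator_add (hr : ∀ s, r s = if (0 < fhat s) ↔ (0 < f s) then 0 else |f s|)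
    (hε : 0 < ε) (s : S) :
    r s ≤ (marginSet f ε).indicator (fun _ => ε) s + (fhat s - f s) ^ 2 / ε := by
  rw [hr s]
  split_ifs with hsign
  · have : 0 ≤ (marginSet f ε).indicator (fun _ => ε) s :=
      Set.indicator_nonneg (fun _ _ => hε.le) s
    positivity
  · exact abs_le_indicator_add_sq_div_of_not_pos_iff hε hsign

theorem integral_regret_le [MeasurableSpace S] {μ : Measure S} (hf : Measurable f)
    (hr : ∀ s, r s = if (0 < fhat s) ↔ (0 < f s) then 0 else |f s|) (hε : 0 < ε)
    (hfin : μ (marginSet f ε) ≠ ⊤) (hint : Integrable (fun s => (fhat s - f s) ^ 2) μ) :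
    ∫ s, r s ∂μ ≤ ε * μ.real (marginSet f ε) + (∫ s, (fhat s - f s) ^ 2 ∂μ) / ε := by
  have hA := measurableSet_marginSet hf ε
  have hind : Integrable ((marginSet f ε).indicator fun _ => ε) μ :=
    (integrableOn_const hfin).integrable_indicator hA
  have hr_nonneg : ∀ s, 0 ≤ r s := fun s => by
    rw [hr s]; split_ifs
    exacts [le_rfl, abs_nonneg _]
  calc ∫ s, r s ∂μ
      ≤ ∫ s, ((marginSet f ε).indicator (fun _ => ε) s + (fhat s - f s) ^ 2 / ε) ∂μ :=
        integral_mono_of_nonneg (.of_forall hr_nonneg) (hind.add (hint.div_const ε))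
          (.of_forall (regret_le_indicator_add hr hε))
    _ = ε * μ.real (marginSet f ε) + (∫ s, (fhat s - f s) ^ 2 ∂μ) / ε := by
        rw [integral_add hind (hint.div_const ε), integral_indicator_const _ hA, integral_div,
          smul_eq_mul, mul_comm]

end Regret

theorem margin_regret_truncation_general
    {S : Type*} [MeasurableSpace S] (μ : Measure S)
    (f fhat : S → ℝ) (hf : Measurable f)
    (r : S → ℝ)
    (hr : ∀ s, r s = if (0 < fhat s) ↔ (0 < f s) then 0 else |f s|)
    (ε : ℝ) (hε : 0 < ε)
    (C α : ℝ) (hC : 0 ≤ C)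
    (hmargin : μ {s | 0 < |f s| ∧ |f s| ≤ ε} ≤ ENNReal.ofReal (C * ε ^ α))
    (hint : Integrable (fun s => (fhat s - f s) ^ 2) μ) :
    ∫ s, r s ∂μ
      ≤ C * ε ^ ((1 : ℝ) + α) + (4 / ε) * ∫ s, (fhat s - f s) ^ 2 ∂μ := by
  have hmeasure : μ.real (marginSet f ε) ≤ C * ε ^ α :=
    ENNReal.toReal_le_of_le_ofReal (by positivity) hmargin
  have hfin : μ (marginSet f ε) ≠ ⊤ := ne_top_of_le_ne_top ENNReal.ofReal_ne_top hmargin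
  have hsq : 0 ≤ ∫ s, (fhat s - f s) ^ 2 ∂μ := integral_nonneg fun s => sq_nonneg _
  calc ∫ s, r s ∂μ
      ≤ ε * μ.real (marginSet f ε) + (∫ s, (fhat s - f s) ^ 2 ∂μ) / ε :=
        integral_regret_le hf hr hε hfin hint
    _ ≤ ε * (C * ε ^ α) + (4 / ε) * ∫ s, (fhat s - f s) ^ 2 ∂μ := by
        gcongr
        rw [div_mul_eq_mul_div]
        gcongr
        linarith
    _ = C * ε ^ ((1 : ℝ) + α) + (4 / ε) * ∫ s, (fhat s - f s) ^ 2 ∂μ := by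
        rw [Real.rpow_add hε, Real.rpow_one]; ring

/-- ε-truncation bound in the integrated-risk case of the paper's Lemma 2 (margin):
if `μ{s : 0 < |f s| ≤ ε} ≤ C ε^α` and `∫ (f̂ − f)² dμ < ∞`, then the integrated
decision regret satisfies `∫ r dμ ≤ C ε^{1+α} + (4/ε) ∫ (f̂ − f)² dμ`. -/
theorem margin_regret_truncation
    {S : Type*} [MeasurableSpace S] (μ : Measure S)
    (f fhat : S → ℝ) (hf : Measurable f) (hfhat : Measurable fhat)
    (r : S → ℝ)
    (hr : ∀ s, r s = if (0 < fhat s) ↔ (0 < f s) then 0 else |f s|)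
    (ε : ℝ) (hε : 0 < ε)
    (C α : ℝ) (hC : 0 ≤ C) (hα : 0 ≤ α)
    (hmargin : μ {s | 0 < |f s| ∧ |f s| ≤ ε} ≤ ENNReal.ofReal (C * ε ^ α))
    (hint : Integrable (fun s => (fhat s - f s) ^ 2) μ) :
    ∫ s, r s ∂μ
      ≤ C * ε ^ ((1 : ℝ) + α) + (4 / ε) * ∫ s, (fhat s - f s) ^ 2 ∂μ :=
  margin_regret_truncation_general μ f fhat hf r hr ε hε C α hC hmargin hint
end
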